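/- With the 18-generator 𝔽₂-vector space V and the linear map d of the left-handed trefoil complex (d{x₁,w̌₂} = {y̌₁,ŷ₂}+{ŷ₁,y̌₂}; d{x₁,ŵ₂} = {ŷ₁,ŷ₂}+{y̌₂,z₁}+{y̌₁,z₂}; d{x₂,w̌₁} = {y̌₁,ŷ₂}+{ŷ₁,y̌₂}; d{x₂,ŵ₁} = {ŷ₁,ŷ₂}+{y̌₁,z₂}+{y̌₂,z₁}; d{y̌₁,z₂} = {w̌₁,ŵ₂}+{ŵ₁,w̌₂}; d{ŷ₁,z₂} = {ŵ₁,ŵ₂}; d{y̌₂,z₁} = {w̌₁,ŵ₂}+{ŵ₁,w̌₂}; d{ŷ₂,z₁} = {ŵ₁,ŵ₂}; d{w̌₁,ŵ₂} = {z₁,z₂}; d{ŵ₁,w̌₂} = {z₁,z₂}; d{y̌₁,ŷ₂} = {w̌₁,w̌₂}; d{ŷ₁,y̌₂} = {w̌₁,w̌₂}; d = 0 otherwise), the cohomology ker(d)/im(d) has dimension 6 over 𝔽₂, with basis represented by the classes {x₁,x₂}, {x₁,w̌₂}+{x₂,w̌₁}, {y̌₁,y̌₂}, {x₁,ŵ₂}+{x₂,ŵ₁},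 {y̌₁,z₂}+{y̌₂,z₁}, {ŷ₁,z₂}+{ŷ₂,z₁}. -/

import Mathlib

/-!  The cochain complex (with `ħ = 1`, coefficients `𝔽₂`) of the left-handed trefoil.
Basis indexing of the 18 generators:
0 = {x₁,x₂}, 1 = {x₁,w̌₂}, 2 = {x₁,ŵ₂}, 3 = {x₂,w̌₁}, 4 = {x₂,ŵ₁},
5 = {y̌₁,ŷ₂}, 6 = {ŷ₁,y̌₂}, 7 = {y̌₁,y̌₂}, 8 = {ŷ₁,ŷ₂},
9 = {y̌₁,z₂}, 10 = {ŷ₁,z₂}, 11 = {y̌₂,z₁}, 12 = {ŷ₂,z₁},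
13 = {w̌₁,ŵ₂}, 14 = {ŵ₁,w̌₂}, 15 = {w̌₁,w̌₂}, 16 = {ŵ₁,ŵ₂}, 17 = {z₁,z₂}.  -/

/-- The underlying `𝔽₂`-vector space with 18 basis vectors. -/
abbrev TrefoilV : Type := Fin 18 → ZMod 2

/-- The `i`-th basis vector. -/
def trefoilGen (i : Fin 18) : TrefoilV := Pi.single i 1

/-- The differential of the left-handed trefoil complex:
`d{x₁,w̌₂} = {y̌₁,ŷ₂}+{ŷ₁,y̌₂}`; `d{x₁,ŵ₂} = {ŷ₁,ŷ₂}+{y̌₂,z₁}+{y̌₁,z₂}`;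
`d{x₂,w̌₁} = {y̌₁,ŷ₂}+{ŷ₁,y̌₂}`; `d{x₂,ŵ₁} = {ŷ₁,ŷ₂}+{y̌₁,z₂}+{y̌₂,z₁}`;
`d{y̌₁,z₂} = {w̌₁,ŵ₂}+{ŵ₁,w̌₂}`; `d{ŷ₁,z₂} = {ŵ₁,ŵ₂}`;
`d{y̌₂,z₁} = {w̌₁,ŵ₂}+{ŵ₁,w̌₂}`; `d{ŷ₂,z₁} = {ŵ₁,ŵ₂}`;
`d{w̌₁,ŵ₂} = {z₁,z₂}`; `d{ŵ₁,w̌₂} = {z₁,z₂}`;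
`d{y̌₁,ŷ₂} = {w̌₁,w̌₂}`; `d{ŷ₁,y̌₂} = {w̌₁,w̌₂}`; `d = 0` otherwise. -/
noncomputable def trefoilLeftD : TrefoilV →ₗ[ZMod 2] TrefoilV :=
  Matrix.toLin' (Matrix.of fun i j : Fin 18 =>
    if ((i : ℕ), (j : ℕ)) ∈
      [(5, 1), (6, 1), (8, 2), (11, 2), (9, 2), (5, 3), (6, 3), (8, 4), (9, 4), (11, 4),
       (13, 9), (14, 9), (16, 10), (13, 11), (14, 11), (16, 12), (17, 13), (17, 14),
       (15, 5), (15, 6)] then 1 else 0)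

/-- The cohomology `ker d / im d` of the left-handed trefoil complex. -/
noncomputable abbrev trefoilLeftCohomology :=
  LinearMap.ker trefoilLeftD ⧸
    Submodule.comap (LinearMap.ker trefoilLeftD).subtype (LinearMap.range trefoilLeftD)

/-! An explicit deformation retraction computes the cohomology. `p` sends a cocycle to its
coordinates in the claimed basis, `v` sends coordinates to the corresponding combination of the
six representatives, and a chain homotopy `h` with `1 - v p = d h + h d` shows that every cocycle
is cohomologous to `v (p x)`; together with `p v = 1` and `p d = 0` this makes `v` induce an
isomorphism `𝔽₂⁶ ≃ ker d / im d`. The homotopy was found by solving that linear system; the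
four matrix identities are checked by direct computation. -/

namespace LinearMap

variable {R M W : Type*} [CommRing R] [AddCommGroup M] [Module R M] [AddCommGroup W]
  [Module R W] {d : M →ₗ[R] M} {p : M →ₗ[R] W} {v : W →ₗ[R] M}

theorem sub_mem_range_of_homotopy {h : M →ₗ[R] M} (hh : id - v ∘ₗ p = d ∘ₗ h + h ∘ₗ d)
    {x : M} (hx : x ∈ ker d) : x - v (p x) ∈ range d := by
  have hxh : x - v (p x) = d (h x) + h (d x) := congr($hh x)
  rw [hxh, mem_ker.mp hx, map_zero, add_zero]
  exact mem_range_self d (h x)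

noncomputable def kerQuotRangeEquivOfRetract (hdv : d ∘ₗ v = 0) (hpd : p ∘ₗ d = 0)
    (hpv : p ∘ₗ v = id) (hvp : ∀ x ∈ ker d, x - v (p x) ∈ range d) :
    W ≃ₗ[R] ker d ⧸ (range d).comap (ker d).subtype :=
  LinearEquiv.ofLinearMap
    (((range d).comap (ker d).subtype).mkQ ∘ₗ v.codRestrict (ker d) fun w => congr($hdv w))
    (((range d).comap (ker d).subtype).liftQ (p ∘ₗ (ker d).subtype) <| by
      rintro x ⟨y, hy⟩
      rw [mem_ker, comp_apply, ← hy]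
      exact congr($hpd y))
    (by
      ext x
      refine (Submodule.Quotient.eq _).mpr ?_
      simpa using neg_mem (hvp x x.2))
    (by ext w; exact congr($hpv w))

theorem kerQuotRangeEquivOfRetract_apply (hdv : d ∘ₗ v = 0) (hpd : p ∘ₗ d = 0)
    (hpv : p ∘ₗ v = id) (hvp : ∀ x ∈ ker d, x - v (p x) ∈ range d) (w : W) :
    kerQuotRangeEquivOfRetract hdv hpd hpv hvp w =
      Submodule.Quotient.mk ⟨v w, congr($hdv w)⟩ :=
  rfl

end LinearMap

open Matrix

def trefoilLeftCocycles : Fin 6 → TrefoilV :=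
  ![trefoilGen 0, trefoilGen 1 + trefoilGen 3, trefoilGen 7,
    trefoilGen 2 + trefoilGen 4, trefoilGen 9 + trefoilGen 11,
    trefoilGen 10 + trefoilGen 12]

noncomputable def trefoilLeftReps : (Fin 6 → ZMod 2) →ₗ[ZMod 2] TrefoilV :=
  toLin' (of trefoilLeftCocycles)ᵀ

noncomputable def trefoilLeftCoords : TrefoilV →ₗ[ZMod 2] (Fin 6 → ZMod 2) :=
  toLin' (of ![trefoilGen 0, trefoilGen 1, trefoilGen 7,
    trefoilGen 2, trefoilGen 8 + trefoilGen 9, trefoilGen 10])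

noncomputable def trefoilLeftHomotopy : TrefoilV →ₗ[ZMod 2] TrefoilV :=
  toLin' (of fun i j : Fin 18 =>
    if ((i : ℕ), (j : ℕ)) ∈ [(3, 6), (4, 8), (5, 15), (11, 14), (12, 16), (13, 17)] then 1 else 0)

theorem trefoilLeftD_comp_reps : trefoilLeftD ∘ₗ trefoilLeftReps = 0 := by
  rw [trefoilLeftD, trefoilLeftReps, ← toLin'_mul, LinearEquiv.map_eq_zero_iff]
  decide

theorem trefoilLeftCoords_comp_d : trefoilLeftCoords ∘ₗ trefoilLeftD = 0 := by
  rw [trefoilLeftD, trefoilLeftCoords, ← toLin'_mul, LinearEquiv.map_eq_zero_iff]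
  decide

theorem trefoilLeftCoords_comp_reps : trefoilLeftCoords ∘ₗ trefoilLeftReps = LinearMap.id := by
  rw [trefoilLeftCoords, trefoilLeftReps, ← toLin'_mul, ← toLin'_one]
  exact congrArg toLin' (by decide)

theorem trefoilLeft_homotopy :
    LinearMap.id - trefoilLeftReps ∘ₗ trefoilLeftCoords =
      trefoilLeftD ∘ₗ trefoilLeftHomotopy + trefoilLeftHomotopy ∘ₗ trefoilLeftD := by
  rw [trefoilLeftD, trefoilLeftCoords, trefoilLeftReps, trefoilLeftHomotopy, ← toLin'_one,
    ← toLin'_mul, ← toLin'_mul, ← toLin'_mul, ← map_sub, ← map_add]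
  exact congrArg toLin' (by decide)

theorem trefoilLeftReps_single (i : Fin 6) :
    trefoilLeftReps (Pi.single i 1) = trefoilLeftCocycles i := by
  rw [trefoilLeftReps, toLin'_apply, mulVec_single_one]
  rfl

theorem trefoilLeftCocycles_mem_ker (i : Fin 6) :
    trefoilLeftCocycles i ∈ LinearMap.ker trefoilLeftD :=
  trefoilLeftReps_single i ▸ congr($trefoilLeftD_comp_reps (Pi.single i 1))

noncomputable def trefoilLeftCohomologyEquiv :
    (Fin 6 → ZMod 2) ≃ₗ[ZMod 2] trefoilLeftCohomology :=
  LinearMap.kerQuotRangeEquivOfRetract trefoilLeftD_comp_reps trefoilLeftCoords_comp_d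
    trefoilLeftCoords_comp_reps fun _ => LinearMap.sub_mem_range_of_homotopy trefoilLeft_homotopy

/-- The cohomology of the left-handed trefoil complex has dimension 6 over `𝔽₂`,
with basis represented by `{x₁,x₂}`, `{x₁,w̌₂}+{x₂,w̌₁}`, `{y̌₁,y̌₂}`,
`{x₁,ŵ₂}+{x₂,ŵ₁}`, `{y̌₁,z₂}+{y̌₂,z₁}`, `{ŷ₁,z₂}+{ŷ₂,z₁}`. -/
theorem trefoil_left_cohomology :
    Module.finrank (ZMod 2) trefoilLeftCohomology = 6 ∧
    ∃ (hmem : ∀ i : Fin 6,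
        (![trefoilGen 0, trefoilGen 1 + trefoilGen 3, trefoilGen 7,
           trefoilGen 2 + trefoilGen 4, trefoilGen 9 + trefoilGen 11,
           trefoilGen 10 + trefoilGen 12] i) ∈ LinearMap.ker trefoilLeftD)
      (b : Module.Basis (Fin 6) (ZMod 2) trefoilLeftCohomology),
      ∀ i : Fin 6, b i = Submodule.Quotient.mk
        ⟨![trefoilGen 0, trefoilGen 1 + trefoilGen 3, trefoilGen 7,
           trefoilGen 2 + trefoilGen 4, trefoilGen 9 + trefoilGen 11,
           trefoilGen 10 + trefoilGen 12] i, hmem i⟩ := by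
  let b := (Pi.basisFun (ZMod 2) (Fin 6)).map trefoilLeftCohomologyEquiv
  refine ⟨by rw [Module.finrank_eq_card_basis b, Fintype.card_fin],
    trefoilLeftCocycles_mem_ker, b, fun i => ?_⟩
  rw [Module.Basis.map_apply, Pi.basisFun_apply, trefoilLeftCohomologyEquiv,
    LinearMap.kerQuotRangeEquivOfRetract_apply]
  exact congrArg Submodule.Quotient.mk (Subtype.ext (trefoilLeftReps_single i))
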